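/- arXiv:1707.05098 — 2 statements merged into one kernel-verified Lean document; each statement's English description precedes it below -/
import Mathlib

section
/- Fix a natural number n ≥ 1 and set f(r) = 1 + ((n+1)/n)·sinh²r. Suppose Θ : (0,∞) → ℝ is smooth and positive and f''(r) + (Θ'(r)/Θ(r))·f'(r) = 4(n+1)·f(r) for all r > 0. Then Θ'(r)/Θ(r) = (2n-1)·coth r + tanh r for all r > 0. -/
open Real Set

/-- If f(r) = 1 + ((n+1)/n) sinh² r satisfies f'' + (Θ'/Θ) f' = 4(n+1) f on (0,∞),
    then Θ'/Θ = (2n-1) coth r + tanh r. -/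
theorem stmt_4 (n : ℕ) (hn : 1 ≤ n) (Θ : ℝ → ℝ)
    (hsmooth : ContDiffOn ℝ (⊤ : ℕ∞) Θ (Ioi 0))
    (hpos : ∀ r ∈ Ioi (0 : ℝ), 0 < Θ r)
    (f : ℝ → ℝ) (hf : f = fun r => 1 + (((n : ℝ) + 1) / n) * Real.sinh r ^ 2)
    (hode : ∀ r ∈ Ioi (0 : ℝ),
      deriv (deriv f) r + (deriv Θ r / Θ r) * deriv f r = 4 * ((n : ℝ) + 1) * f r) :
    ∀ r ∈ Ioi (0 : ℝ),
      deriv Θ r / Θ r = (2 * (n : ℝ) - 1) * (Real.cosh r / Real.sinh r) + Real.tanh r := by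
  have hn0 : (n : ℝ) ≠ 0 := Nat.cast_ne_zero.mpr (by omega)
  set c : ℝ := ((n : ℝ) + 1) / n with hc
  have hcpos : 0 < c := div_pos (by positivity) (by positivity)
  have h1 : ∀ r : ℝ, HasDerivAt f (c * (2 * Real.sinh r * Real.cosh r)) r := by
    intro r
    rw [hf]
    have : HasDerivAt (fun x => 1 + c * Real.sinh x ^ 2) _ r :=
      (((Real.hasDerivAt_sinh r).pow 2).const_mul c).const_add 1
    convert this using 1
    ring
  have hd1 : deriv f = fun r => c * (2 * Real.sinh r * Real.cosh r) :=
    funext fun r => (h1 r).deriv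
  have h2 : ∀ r : ℝ, HasDerivAt (deriv f)
      (c * (2 * (Real.cosh r * Real.cosh r + Real.sinh r * Real.sinh r))) r := by
    intro r
    rw [hd1]
    have : HasDerivAt (fun x => c * (2 * (Real.sinh x * Real.cosh x))) _ r :=
      (((Real.hasDerivAt_sinh r).mul (Real.hasDerivAt_cosh r)).const_mul
      (2 : ℝ)).const_mul c
    convert this using 2
    ring
  intro r hr
  have hrpos : 0 < r := hr
  have hs : 0 < Real.sinh r := Real.sinh_pos_iff.mpr hrpos
  have hch : 0 < Real.cosh r := Real.cosh_pos r
  have heq := hode r hr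
  rw [(h2 r).deriv, hd1, hf] at heq
  simp only at heq
  have hsq : Real.cosh r ^ 2 = Real.sinh r ^ 2 + 1 := Real.cosh_sq r
  rw [Real.tanh_eq_sinh_div_cosh]
  have hQ : deriv Θ r / Θ r * (c * (2 * Real.sinh r * Real.cosh r)) =
      4 * ((n : ℝ) + 1) * (1 + c * Real.sinh r ^ 2) -
      c * (2 * (Real.cosh r * Real.cosh r + Real.sinh r * Real.sinh r)) := by
    linarith [heq]
  have hne : c * (2 * Real.sinh r * Real.cosh r) ≠ 0 := by positivity
  have hcn : c * (n : ℝ) = (n : ℝ) + 1 := by rw [hc]; field_simp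
  have hT : ((2 * (n : ℝ) - 1) * (Real.cosh r / Real.sinh r) + Real.sinh r / Real.cosh r) *
      (c * (2 * Real.sinh r * Real.cosh r)) =
      4 * ((n : ℝ) + 1) * (1 + c * Real.sinh r ^ 2) -
      c * (2 * (Real.cosh r * Real.cosh r + Real.sinh r * Real.sinh r)) := by
    rw [hc]
    field_simp
    linear_combination (4 * (n : ℝ)) * hsq
  exact mul_right_cancel₀ hne (hQ.trans hT.symm)
end

section
/- Fix a natural number n ≥ 1 and set f(r) = 1 + ((n+1)/n)·sinh²r. Suppose Θ : (0,∞) → ℝ is smooth and positive and f''(r) + (Θ'(r)/Θ(r))·f'(r) = 8(n+1)·f(r) for all r > 0. Then Θ'(r)/Θ(r) = (4n-1)·coth r + 3·tanh r for all r > 0. -/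
open Real Set

/-- If f(r) = 1 + ((n+1)/n) sinh² r satisfies f'' + (Θ'/Θ) f' = 8(n+1) f on (0,∞),
    then Θ'/Θ = (4n-1) coth r + 3 tanh r. -/
theorem stmt_5 (n : ℕ) (hn : 1 ≤ n) (Θ : ℝ → ℝ)
    (hsmooth : ContDiffOn ℝ (⊤ : ℕ∞) Θ (Ioi 0))
    (hpos : ∀ r ∈ Ioi (0 : ℝ), 0 < Θ r)
    (f : ℝ → ℝ) (hf : f = fun r => 1 + (((n : ℝ) + 1) / n) * Real.sinh r ^ 2)
    (hode : ∀ r ∈ Ioi (0 : ℝ),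
      deriv (deriv f) r + (deriv Θ r / Θ r) * deriv f r = 8 * ((n : ℝ) + 1) * f r) :
    ∀ r ∈ Ioi (0 : ℝ),
      deriv Θ r / Θ r = (4 * (n : ℝ) - 1) * (Real.cosh r / Real.sinh r) + 3 * Real.tanh r := by
  intro r hr
  have hnpos : (0 : ℝ) < n := by exact_mod_cast hn
  set c : ℝ := ((n : ℝ) + 1) / n with hc
  have hcpos : 0 < c := by positivity
  have hd1 : deriv f = fun x => c * (2 * Real.sinh x * Real.cosh x) := by
    funext x
    have h : HasDerivAt f (c * (2 * Real.sinh x ^ 1 * Real.cosh x)) x := by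
      rw [hf]
      exact (((Real.hasDerivAt_sinh x).pow 2).const_mul c).const_add 1
    simpa using h.deriv
  have hd2 : deriv (deriv f) r
      = c * (2 * (Real.cosh r * Real.cosh r + Real.sinh r * Real.sinh r)) := by
    rw [hd1]
    have h : HasDerivAt (fun x => c * (2 * Real.sinh x * Real.cosh x))
        (c * (2 * (Real.cosh r * Real.cosh r + Real.sinh r * Real.sinh r))) r := by
      have := (((Real.hasDerivAt_sinh r).const_mul 2).mul (Real.hasDerivAt_cosh r)).const_mul c
      refine this.congr_deriv ?_
      ring
    exact h.deriv
  have hode' := hode r hr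
  rw [hd2, hd1, hf] at hode'
  simp only at hode'
  have hs : 0 < Real.sinh r := Real.sinh_pos_iff.2 hr
  have hch : 0 < Real.cosh r := Real.cosh_pos r
  have hid : Real.cosh r ^ 2 = 1 + Real.sinh r ^ 2 := by
    have := Real.cosh_sq_sub_sinh_sq r
    nlinarith [this]
  rw [Real.tanh_eq_sinh_div_cosh]
  have key : (deriv Θ r / Θ r) * (c * (2 * Real.sinh r * Real.cosh r))
      = ((4 * (n : ℝ) - 1) * (Real.cosh r / Real.sinh r) + 3 * (Real.sinh r / Real.cosh r))
        * (c * (2 * Real.sinh r * Real.cosh r)) := by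
    rw [show (deriv Θ r / Θ r) * (c * (2 * Real.sinh r * Real.cosh r))
        = 8 * ((n : ℝ) + 1) * (1 + c * Real.sinh r ^ 2)
          - c * (2 * (Real.cosh r * Real.cosh r + Real.sinh r * Real.sinh r)) by
      linarith [hode']]
    have h2 : Real.cosh r * Real.cosh r = 1 + Real.sinh r ^ 2 := by nlinarith [hid]
    rw [hc]; field_simp
    linear_combination (-8*(n:ℝ)) * hid
  have hne : c * (2 * Real.sinh r * Real.cosh r) ≠ 0 := by positivity
  exact mul_right_cancel₀ hne key
end
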